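/- arXiv:2106.10051 — 3 statements merged into one kernel-verified Lean document; each statement's English description precedes it below -/
import Mathlib

section
/- Let n ≥ 2, let e, e' ∈ ℝ^n be two distinct standard basis vectors and let a, b ∈ ℝ^n be vectors such that the four vectors e, a, e', b are linearly independent. Then the symmetric matrix M = e aᵀ + a eᵀ + e' bᵀ + b e'ᵀ has rank exactly 4. -/
open Matrix

/-- Let `n ≥ 2`, let `e, e' ∈ ℝ^n` be two distinct standard basis vectors, and let
`a, b ∈ ℝ^n` be such that `e, a, e', b` are linearly independent.  Then the symmetric
matrix `M = e aᵀ + a eᵀ + e' bᵀ + b e'ᵀ` has rank exactly 4. -/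
theorem rank_outer_sym_sum_eq_four (n : ℕ) (hn : 2 ≤ n) (i j : Fin n) (hij : i ≠ j)
    (e e' a b : Fin n → ℝ)
    (he : e = Pi.single i 1) (he' : e' = Pi.single j 1)
    (hli : LinearIndependent ℝ ![e, a, e', b]) :
    (vecMulVec e a + vecMulVec a e + vecMulVec e' b + vecMulVec b e').rank = 4 := by
  clear he he' hij hn
  set Q : Matrix (Fin 4) (Fin n) ℝ := Matrix.of ![e, a, e', b] with hQdef
  set C : Matrix (Fin 4) (Fin 4) ℝ := !![0,1,0,0;1,0,0,0;0,0,0,1;0,0,1,0] with hCdef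
  have hM : vecMulVec e a + vecMulVec a e + vecMulVec e' b + vecMulVec b e'
      = Qᵀ * (C * Q) := by
    ext k l
    simp [Matrix.mul_apply, Fin.sum_univ_four, vecMulVec_apply, hQdef, hCdef,
      Matrix.vecHead, Matrix.vecTail]
  have hQrank : Q.rank = 4 := by
    have := hli.rank_matrix (M := Q)
    simpa using this
  have hGrank : (Q * Qᵀ).rank = 4 := by
    rw [rank_self_mul_transpose]; exact hQrank
  -- G := Q * Qᵀ is invertible
  have hGdet : IsUnit (Q * Qᵀ).det := by
    rw [isUnit_iff_ne_zero]
    intro h0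
    obtain ⟨v, hv, hv0⟩ := (Matrix.exists_mulVec_eq_zero_iff).mpr h0
    have hker : v ∈ LinearMap.ker (Q * Qᵀ).mulVecLin := by
      rw [LinearMap.mem_ker, mulVecLin_apply]; exact hv0
    have hrange : Module.finrank ℝ (LinearMap.range (Q * Qᵀ).mulVecLin) = 4 := hGrank
    have h4' : Module.finrank ℝ (LinearMap.range (Q * Qᵀ).mulVecLin)
        + Module.finrank ℝ (LinearMap.ker (Q * Qᵀ).mulVecLin) = 4 := by
      simpa using LinearMap.finrank_range_add_finrank_ker (Q * Qᵀ).mulVecLin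
    have hker0 : Module.finrank ℝ (LinearMap.ker (Q * Qᵀ).mulVecLin) = 0 := by omega
    have : LinearMap.ker (Q * Qᵀ).mulVecLin = ⊥ :=
      Submodule.finrank_eq_zero.mp hker0
    rw [this, Submodule.mem_bot] at hker
    exact hv hker
  have hCC : C * C = 1 := by
    ext k l
    fin_cases k <;> fin_cases l <;>
      simp [hCdef, Matrix.mul_apply, Fin.sum_univ_four, Matrix.one_apply, Matrix.vecHead, Matrix.vecTail]
  have hCdet : IsUnit C.det := Matrix.isUnit_det_of_left_inverse hCC
  have hCunit : IsUnit C := (Matrix.isUnit_iff_isUnit_det C).mpr hCdet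
  -- upper bound
  have hub : (Qᵀ * (C * Q)).rank ≤ 4 := by
    calc (Qᵀ * (C * Q)).rank ≤ (C * Q).rank := rank_mul_le_right _ _
      _ ≤ Q.rank := rank_mul_le_right _ _
      _ = 4 := hQrank
  -- lower bound
  have key : Q * (Qᵀ * (C * Q)) * Qᵀ = (Q * Qᵀ) * C * (Q * Qᵀ) := by
    simp only [Matrix.mul_assoc]
  have hlb4 : (Q * (Qᵀ * (C * Q)) * Qᵀ).rank = 4 := by
    rw [key, rank_mul_eq_left_of_isUnit_det _ _ hGdet,
      rank_mul_eq_right_of_isUnit_det _ _ hGdet, rank_of_isUnit _ hCunit]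
    exact Fintype.card_fin 4
  have hlb : 4 ≤ (Qᵀ * (C * Q)).rank := by
    calc 4 = (Q * (Qᵀ * (C * Q)) * Qᵀ).rank := hlb4.symm
      _ ≤ (Q * (Qᵀ * (C * Q))).rank := rank_mul_le_left _ _
      _ ≤ (Qᵀ * (C * Q)).rank := rank_mul_le_right _ _
  rw [hM]
  omega
end

section
/- Let Φ be a real m×n matrix and D an n×n diagonal matrix with positive diagonal entries such that Φ D Φᵀ is invertible, and let d_max denote the largest diagonal entry of D. Then for every w ∈ ℝ^n, ‖(I − D Φᵀ (Φ D Φᵀ)^{-1} Φ) D w‖ ≤ d_max · ‖w‖, where ‖·‖ is the Euclidean norm. -/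
open Matrix
open scoped Matrix.Norms.L2Operator

/-! With `S = D^{1/2}`, the matrix factors as `S P S`, where `P = I - Aᴴ (A Aᴴ)⁻¹ A` for
`A = Φ S` is the orthogonal projection onto `ker A`. In the `L²` operator norm, a C⋆-norm,
`‖P‖ ≤ 1` and `‖S‖ = √d_max`, so the matrix has norm at most `d_max`. -/

namespace Matrix

variable {m n R : Type*} [Fintype m] [Fintype n] [DecidableEq m]

theorem isStarProjection_conjTranspose_mul_inv_mul [CommRing R] [StarRing R]
    (A : Matrix m n R) (hA : IsUnit (A * Aᴴ)) :
    IsStarProjection (Aᴴ * (A * Aᴴ)⁻¹ * A) where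
  isIdempotentElem := by
    have hinv : (A * Aᴴ)⁻¹ * (A * Aᴴ) = 1 :=
      nonsing_inv_mul _ ((isUnit_iff_isUnit_det _).mp hA)
    calc Aᴴ * (A * Aᴴ)⁻¹ * A * (Aᴴ * (A * Aᴴ)⁻¹ * A)
        = Aᴴ * ((A * Aᴴ)⁻¹ * (A * Aᴴ)) * (A * Aᴴ)⁻¹ * A := by
          simp only [Matrix.mul_assoc]
      _ = Aᴴ * (A * Aᴴ)⁻¹ * A := by rw [hinv, Matrix.mul_one]
  isSelfAdjoint := by
    rw [IsSelfAdjoint, star_eq_conjTranspose, conjTranspose_mul, conjTranspose_mul,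
      conjTranspose_nonsing_inv, conjTranspose_mul, conjTranspose_conjTranspose, Matrix.mul_assoc]

theorem one_sub_mul_inv_mul_mul_self_eq_mul_mul [DecidableEq n] [CommRing R] [StarRing R]
    (Φ : Matrix m n R) (S : Matrix n n R) (hS : Sᴴ = S) :
    (1 - S * S * Φᴴ * (Φ * (S * S) * Φᴴ)⁻¹ * Φ) * (S * S) =
      S * (1 - (Φ * S)ᴴ * (Φ * S * (Φ * S)ᴴ)⁻¹ * (Φ * S)) * S := by
  simp only [conjTranspose_mul, hS, Matrix.sub_mul, Matrix.mul_sub, Matrix.one_mul,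
    Matrix.mul_one, Matrix.mul_assoc]

theorem l2_opNorm_diagonal_le [DecidableEq n] {𝕜 : Type*} [RCLike 𝕜] {v : n → 𝕜} {c : ℝ}
    (hc : 0 ≤ c) (hv : ∀ i, ‖v i‖ ≤ c) : ‖(diagonal v : Matrix n n 𝕜)‖ ≤ c := by
  rw [l2_opNorm_diagonal]
  exact (pi_norm_le_iff_of_nonneg hc).mpr hv

end Matrix

/-- Let `Φ` be a real `m × n` matrix and `D` a diagonal matrix with positive diagonal
entries such that `Φ D Φᵀ` is invertible, and let `d_max` be the largest diagonal
entry of `D`.  Then for every `w ∈ ℝ^n`,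
`‖(I − D Φᵀ (Φ D Φᵀ)⁻¹ Φ) D w‖ ≤ d_max ‖w‖` (Euclidean norms). -/
theorem multiplier_update_norm_bound (m n : ℕ)
    (Φ : Matrix (Fin m) (Fin n) ℝ) (d : Fin n → ℝ) (hd : ∀ i, 0 < d i)
    (D : Matrix (Fin n) (Fin n) ℝ) (hD : D = Matrix.diagonal d)
    (hinv : IsUnit (Φ * D * Φᵀ))
    (dmax : ℝ) (hmax : IsGreatest (Set.range d) dmax) :
    ∀ w : Fin n → ℝ,
      ‖(EuclideanSpace.equiv (Fin n) ℝ).symm (((1 - D * Φᵀ * (Φ * D * Φᵀ)⁻¹ * Φ) * D) *ᵥ w)‖ ≤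
        dmax * ‖(EuclideanSpace.equiv (Fin n) ℝ).symm w‖ := by
  intro w
  set S : Matrix (Fin n) (Fin n) ℝ := diagonal fun i => √(d i)
  have hSS : S * S = D := by
    rw [diagonal_mul_diagonal, hD]
    exact congrArg diagonal (funext fun i => Real.mul_self_sqrt (hd i).le)
  have hSt : Sᴴ = S := by simp [S]
  have hdmax : 0 ≤ dmax := by
    obtain ⟨i, rfl⟩ := hmax.1
    exact (hd i).le
  have hS : ‖S‖ ≤ √dmax := l2_opNorm_diagonal_le (Real.sqrt_nonneg _) fun i => by
    rw [Real.norm_of_nonneg (Real.sqrt_nonneg _)]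
    exact Real.sqrt_le_sqrt (hmax.2 ⟨i, rfl⟩)
  have hP := (isStarProjection_conjTranspose_mul_inv_mul (Φ * S) (by
    rwa [conjTranspose_mul, hSt, conjTranspose_eq_transpose_of_trivial, ← Matrix.mul_assoc,
      Matrix.mul_assoc Φ, hSS])).one_sub
  rw [← hSS, ← conjTranspose_eq_transpose_of_trivial,
    one_sub_mul_inv_mul_mul_self_eq_mul_mul Φ S hSt]
  refine (l2_opNorm_mulVec _ _).trans (mul_le_mul_of_nonneg_right ?_ (norm_nonneg _))
  calc ‖S * _ * S‖ ≤ ‖S‖ * ‖_‖ * ‖S‖ := norm_mul₃_le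
    _ ≤ √dmax * 1 * √dmax := by gcongr; exact hP.norm_le
    _ = dmax := by rw [mul_one, Real.mul_self_sqrt hdmax]
end

section
/- Let Φ be a real m×n matrix and D an n×n diagonal matrix with positive diagonal entries such that A = Φ D Φᵀ is invertible (hence symmetric positive definite), let d_max denote the largest diagonal entry of D, and let λ_min > 0 denote the smallest eigenvalue of A. Then for every w ∈ ℝ^n, ‖A^{-1} Φ D w‖² ≤ (d_max/λ_min) · ‖w‖², where ‖·‖ is the Euclidean norm. -/
/-!
Put `u = Φᵀ v` for `v = A⁻¹ Φ D w`. Since `A v = Φ D w`, both `vᵀ A v` and `vᵀ Φ D w` equal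
`uᵀ D u = uᵀ D w`, so `0 ≤ (u - w)ᵀ D (u - w) = wᵀ D w - vᵀ A v`. Hence
`λ_min ‖v‖² ≤ vᵀ A v ≤ wᵀ D w ≤ d_max ‖w‖²`.
-/

open Matrix

theorem EuclideanSpace.norm_equiv_symm_sq {ι : Type*} [Fintype ι] (v : ι → ℝ) :
    ‖(EuclideanSpace.equiv ι ℝ).symm v‖ ^ 2 = v ⬝ᵥ v := by
  rw [← real_inner_self_eq_norm_sq]
  rfl

namespace Matrix

variable {ι κ : Type*} [Fintype ι] [Fintype κ]

open scoped MatrixOrder in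
theorem IsHermitian.mul_dotProduct_self_le [DecidableEq ι] {A : Matrix ι ι ℝ}
    (hA : A.IsHermitian) {lam : ℝ} (hlam : lam ∈ lowerBounds (spectrum ℝ A)) (x : ι → ℝ) :
    lam * (x ⬝ᵥ x) ≤ x ⬝ᵥ (A *ᵥ x) := by
  have hpsd : (A - algebraMap ℝ _ lam).PosSemidef :=
    (algebraMap_le_iff_le_spectrum (a := A) hA.isSelfAdjoint).2 hlam
  simpa [sub_mulVec, dotProduct_sub, Algebra.algebraMap_eq_smul_one, smul_mulVec]
    using hpsd.dotProduct_mulVec_nonneg x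

theorem PosSemidef.dotProduct_mulVec_le_of_mulVec_eq {D : Matrix κ κ ℝ} (hD : D.PosSemidef)
    (Φ : Matrix ι κ ℝ) {v : ι → ℝ} {w : κ → ℝ} (h : (Φ * D * Φᵀ) *ᵥ v = (Φ * D) *ᵥ w) :
    v ⬝ᵥ ((Φ * D * Φᵀ) *ᵥ v) ≤ w ⬝ᵥ (D *ᵥ w) := by
  set u := Φᵀ *ᵥ v
  have hpull : ∀ y, v ⬝ᵥ ((Φ * D) *ᵥ y) = u ⬝ᵥ (D *ᵥ y) := fun y => by
    rw [← mulVec_mulVec, dotProduct_mulVec, ← mulVec_transpose]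
  have hquad : v ⬝ᵥ ((Φ * D * Φᵀ) *ᵥ v) = u ⬝ᵥ (D *ᵥ u) := by
    rw [← mulVec_mulVec, hpull]
  have hcross : u ⬝ᵥ (D *ᵥ u) = u ⬝ᵥ (D *ᵥ w) := by rw [← hquad, h, hpull]
  have hsymm : w ⬝ᵥ (D *ᵥ u) = u ⬝ᵥ (D *ᵥ w) := by
    rw [dotProduct_mulVec, ← mulVec_transpose, dotProduct_comm,
      ← conjTranspose_eq_transpose_of_trivial, hD.isHermitian.eq]
  have hnonneg := hD.dotProduct_mulVec_nonneg (u - w)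
  simp only [star_trivial, mulVec_sub, dotProduct_sub, sub_dotProduct] at hnonneg
  linarith

theorem dotProduct_diagonal_mulVec_le [DecidableEq κ] {d : κ → ℝ} {c : ℝ} (hc : ∀ i, d i ≤ c)
    (w : κ → ℝ) : w ⬝ᵥ (diagonal d *ᵥ w) ≤ c * (w ⬝ᵥ w) := by
  simp only [dotProduct, mulVec_diagonal, Finset.mul_sum]
  exact Finset.sum_le_sum fun i _ => by nlinarith [hc i, mul_self_nonneg (w i)]

end Matrix

/-- Let `Φ` be a real `m × n` matrix and `D` a diagonal matrix with positive diagonal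
entries such that `A = Φ D Φᵀ` is invertible (hence symmetric positive definite), let
`d_max` be the largest diagonal entry of `D` and `λ_min > 0` the smallest eigenvalue
of `A`.  Then for every `w ∈ ℝ^n`, `‖A⁻¹ Φ D w‖² ≤ (d_max/λ_min) ‖w‖²`
(Euclidean norms). -/
theorem global_update_norm_bound (m n : ℕ)
    (Φ : Matrix (Fin m) (Fin n) ℝ) (d : Fin n → ℝ) (hd : ∀ i, 0 < d i)
    (D : Matrix (Fin n) (Fin n) ℝ) (hD : D = Matrix.diagonal d)
    (A : Matrix (Fin m) (Fin m) ℝ) (hA : A = Φ * D * Φᵀ)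
    (hinv : IsUnit A)
    (dmax : ℝ) (hmax : IsGreatest (Set.range d) dmax)
    (lam : ℝ) (hlam : IsLeast (spectrum ℝ A) lam) (hlampos : 0 < lam) :
    ∀ w : Fin n → ℝ,
      ‖(EuclideanSpace.equiv (Fin m) ℝ).symm ((A⁻¹ * Φ * D) *ᵥ w)‖ ^ 2 ≤
        (dmax / lam) * ‖(EuclideanSpace.equiv (Fin n) ℝ).symm w‖ ^ 2 := by
  intro w
  subst hD
  set v := (A⁻¹ * Φ * diagonal d) *ᵥ w
  have hDpsd : (diagonal d).PosSemidef := posSemidef_diagonal_iff.2 fun i => (hd i).le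
  have hAherm : A.IsHermitian := by
    simpa only [hA, conjTranspose_eq_transpose_of_trivial]
      using (hDpsd.mul_mul_conjTranspose_same Φ).isHermitian
  have hAv : A *ᵥ v = (Φ * diagonal d) *ᵥ w := by
    rw [mulVec_mulVec, Matrix.mul_assoc, ← Matrix.mul_assoc,
      mul_nonsing_inv A ((isUnit_iff_isUnit_det A).mp hinv), Matrix.one_mul]
  have hlower := hAherm.mul_dotProduct_self_le hlam.2 v
  have hmiddle : v ⬝ᵥ (A *ᵥ v) ≤ w ⬝ᵥ (diagonal d *ᵥ w) :=
    hA ▸ hDpsd.dotProduct_mulVec_le_of_mulVec_eq Φ (hA ▸ hAv)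
  have hupper := dotProduct_diagonal_mulVec_le (fun i => hmax.2 ⟨i, rfl⟩) w
  rw [EuclideanSpace.norm_equiv_symm_sq, EuclideanSpace.norm_equiv_symm_sq,
    div_mul_eq_mul_div, le_div_iff₀ hlampos]
  linarith
end
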